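/- Let μ1 and μ2 be r×r diagonal real matrices with strictly positive diagonal entries satisfying Tr(μ1²) = Tr(μ2²) = 1. Suppose complex r×r matrices α, β and a complex number c satisfy α μ2 βᵀ = μ1 and βᵀ μ1 α = c μ2. Then c = 1, α is invertible with βᵀ = α^{-1}, so that α μ2 α^{-1} = μ1, and the diagonal entries of μ1 and μ2 coincide as multisets (μ2 is obtained from μ1 by a permutation of the diagonal entries). -/

import Mathlib

open Matrix BigOperators

/-- The diagonal matrix of the (real) coefficients `μ`, as a complex matrix. -/
noncomputable def diagC {r : ℕ} (μ : Fin r → ℝ) : Matrix (Fin r) (Fin r) ℂ :=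
  Matrix.diagonal fun i => (μ i : ℂ)

/-!
Put `A = α⁻¹` and `Dₖ = diagC μₖ`. Cycling the trace through the two relations gives
`Tr D₁² = c Tr D₂²`, so the normalisation forces `c = 1`; and `α` is invertible because `D₁` is.
The relations then give `A D₁² = D₂² A`, i.e. `A i j (μ₁ j ² - μ₂ i ²) = 0`, and positivity
lets us take square roots: `A D₁ = D₂ A`, whence `D₂ βᵀ = A D₁ = D₂ A` and `βᵀ = A`.
Finally a nonzero term of the Leibniz expansion of `det A` is a permutation `σ` with
`A i (σ i) ≠ 0`, hence `μ₂ i = μ₁ (σ i)`.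
-/

namespace Matrix

variable {n R : Type*} [Fintype n] [CommRing R]

theorem trace_mul_self_eq_mul_trace_mul_self {A B D₁ D₂ : Matrix n n R} {c : R}
    (h₁ : A * D₂ * B = D₁) (h₂ : B * D₁ * A = c • D₂) :
    trace (D₁ * D₁) = c * trace (D₂ * D₂) :=
  calc trace (D₁ * D₁) = trace (A * (D₂ * B * D₁)) := by rw [← h₁]; simp only [Matrix.mul_assoc]
    _ = trace (D₂ * (B * D₁ * A)) := by rw [trace_mul_comm]; simp only [Matrix.mul_assoc]
    _ = c * trace (D₂ * D₂) := by rw [h₂, Matrix.mul_smul, trace_smul, smul_eq_mul]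

variable [DecidableEq n]

theorem isUnit_of_mul_mul_eq {A B C D : Matrix n n R} (h : A * B * C = D) (hD : IsUnit D) :
    IsUnit A := by
  rw [← h] at hD
  exact isUnit_of_mul_isUnit_left (isUnit_of_mul_isUnit_left hD)

theorem nonsing_inv_mul_mul_self_of_mul_eq {A B D₁ D₂ : Matrix n n R} (hA : IsUnit A)
    (h₁ : A * D₂ * B = D₁) (h₂ : B * D₁ * A = D₂) :
    A⁻¹ * (D₁ * D₁) = D₂ * D₂ * A⁻¹ := by
  have hdet : IsUnit A.det := (isUnit_iff_isUnit_det A).mp hA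
  calc A⁻¹ * (D₁ * D₁) = (A⁻¹ * A) * (D₂ * (B * D₁)) := by
        rw [← h₁]; simp only [Matrix.mul_assoc]
    _ = D₂ * (B * D₁ * A) * A⁻¹ := by
      rw [nonsing_inv_mul A hdet, Matrix.one_mul, Matrix.mul_assoc D₂,
        Matrix.mul_assoc (B * D₁), mul_nonsing_inv A hdet, Matrix.mul_one]
    _ = D₂ * D₂ * A⁻¹ := by rw [h₂, Matrix.mul_assoc]

theorem mul_diagonal_eq_diagonal_mul_of_mul_self [NoZeroDivisors R] {A : Matrix n n R}
    {a b : n → R} (hab : ∀ i j, a j + b i ≠ 0)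
    (h : A * (diagonal a * diagonal a) = diagonal b * diagonal b * A) :
    A * diagonal a = diagonal b * A := by
  ext i j
  have hij := congr_fun₂ h i j
  simp only [diagonal_mul_diagonal, mul_diagonal, diagonal_mul] at hij ⊢
  have hprod : (A i j * a j - b i * A i j) * (a j + b i) = 0 := by linear_combination hij
  exact sub_eq_zero.mp ((mul_eq_zero.mp hprod).resolve_right (hab i j))

theorem exists_perm_forall_ne_zero_of_det_ne_zero (M : Matrix n n R) (h : M.det ≠ 0) :
    ∃ σ : Equiv.Perm n, ∀ i, M i (σ i) ≠ 0 := by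
  rw [← det_transpose, det_apply'] at h
  obtain ⟨σ, -, hσ⟩ := Finset.exists_ne_zero_of_sum_ne_zero h
  exact ⟨σ, fun i hi => hσ (mul_eq_zero_of_right _ (Finset.prod_eq_zero (Finset.mem_univ i) hi))⟩

theorem exists_perm_eq_of_mul_diagonal_eq_diagonal_mul [NoZeroDivisors R] {A : Matrix n n R}
    (hA : A.det ≠ 0) {a b : n → R} (h : A * diagonal a = diagonal b * A) :
    ∃ σ : Equiv.Perm n, ∀ i, b i = a (σ i) := by
  obtain ⟨σ, hσ⟩ := exists_perm_forall_ne_zero_of_det_ne_zero A hA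
  refine ⟨σ, fun i => ?_⟩
  have hi := congr_fun₂ h i (σ i)
  simp only [mul_diagonal, diagonal_mul] at hi
  exact (mul_left_cancel₀ (hσ i) (hi.trans (mul_comm _ _))).symm

end Matrix

theorem trace_diagC_mul_self {r : ℕ} (μ : Fin r → ℝ) :
    trace (diagC μ * diagC μ) = ((∑ i, μ i ^ 2 : ℝ) : ℂ) := by
  simp [diagC, sq]

theorem isUnit_diagC {r : ℕ} {μ : Fin r → ℝ} (hμ : ∀ i, μ i ≠ 0) : IsUnit (diagC μ) :=
  isUnit_diagonal.mpr (Pi.isUnit_iff.mpr fun i => (Complex.ofReal_ne_zero.mpr (hμ i)).isUnit)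

theorem saturation_forces_similarity {r : ℕ} (μ1 μ2 : Fin r → ℝ)
    (h1 : ∀ i, 0 < μ1 i) (h2 : ∀ i, 0 < μ2 i)
    (hn1 : ∑ i, μ1 i ^ 2 = 1) (hn2 : ∑ i, μ2 i ^ 2 = 1)
    (α β : Matrix (Fin r) (Fin r) ℂ) (c : ℂ)
    (e1 : α * diagC μ2 * βᵀ = diagC μ1)
    (e2 : βᵀ * diagC μ1 * α = c • diagC μ2) :
    c = 1 ∧ IsUnit α ∧ βᵀ = α⁻¹ ∧ α * diagC μ2 * α⁻¹ = diagC μ1 ∧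
      ∃ σ : Equiv.Perm (Fin r), ∀ i, μ2 i = μ1 (σ i) := by
  have hc : c = 1 := by
    simpa [trace_diagC_mul_self, hn1, hn2, eq_comm] using
      trace_mul_self_eq_mul_trace_mul_self e1 e2
  rw [hc, one_smul] at e2
  have hα : IsUnit α := isUnit_of_mul_mul_eq e1 (isUnit_diagC fun i => (h1 i).ne')
  have hsum : ∀ i j, (μ1 j : ℂ) + μ2 i ≠ 0 := fun i j => by
    exact_mod_cast (add_pos (h1 j) (h2 i)).ne'
  have hint : α⁻¹ * diagC μ1 = diagC μ2 * α⁻¹ :=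
    mul_diagonal_eq_diagonal_mul_of_mul_self hsum (nonsing_inv_mul_mul_self_of_mul_eq hα e1 e2)
  have hβ : βᵀ = α⁻¹ := by
    refine (isUnit_diagC fun i => (h2 i).ne').mul_left_cancel ?_
    rw [← hint, ← e1, ← Matrix.mul_assoc, ← Matrix.mul_assoc,
      nonsing_inv_mul α ((isUnit_iff_isUnit_det α).mp hα), Matrix.one_mul]
  have hdet : (α⁻¹).det ≠ 0 := (isUnit_nonsing_inv_det α ((isUnit_iff_isUnit_det α).mp hα)).ne_zero
  obtain ⟨σ, hσ⟩ := exists_perm_eq_of_mul_diagonal_eq_diagonal_mul hdet hint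
  exact ⟨hc, hα, hβ, hβ ▸ e1, σ, fun i => Complex.ofReal_injective (hσ i)⟩
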